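/- Let τ be an injective map on dyadic intervals satisfying condition S: there is M ≥ 1 such that for every dyadic interval J, the collection {τ(I) : τ(I) ⊆ J} splits into τ(L) ∪ E where E satisfies the M-Carleson condition and |τ(I)|/|I| ≤ M |τ(L)*|/|L*| for all I ∈ L. Then the operator T defined by T h_I = h_{τ(I)} is bounded on dyadic BMO with ‖Tx‖² ≤ 4M ‖x‖² (in particular ‖T‖ ≤ 2M^{1/2}). -/

import Mathlib

/-
For a fixed `J`, condition S splits the intervals `τ(I) ⊆ J` into `τ(L)` and `E`; the remaining
intervals inside `J` carry no coefficient of `Tx`. Every coefficient `y_{τ(I)} = x_I` satisfies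
`x_I² ≤ ‖x‖²` (test the supremum at `J = I`), so the Carleson condition bounds the `E`-part by
`M ‖x‖² |J|`. On `τ(L)` the ratio condition gives
`∑_{I ∈ L} x_I² |τ(I)| ≤ (M |τ(L)*| / |L*|) ∑_{I ∈ L} x_I² |I|`, and grouping `L` under its
disjoint maximal intervals gives `∑_{I ∈ L} x_I² |I| ≤ ‖x‖² |L*|`; as `τ(L)* ⊆ J`, this part is
also at most `M ‖x‖² |J|`. Hence even `‖Tx‖² ≤ 2M ‖x‖²`.
-/

open MeasureTheory

/-- A dyadic interval `[k/2^n, (k+1)/2^n)` of `[0,1)`. -/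
structure DI where
  n : ℕ
  k : ℕ
  hk : k < 2 ^ n

namespace DI

/-- The underlying set of a dyadic interval. -/
def carrier (I : DI) : Set ℝ := Set.Ico ((I.k : ℝ) / 2 ^ I.n) ((I.k + 1 : ℝ) / 2 ^ I.n)

/-- The length `|I| = 2^{-n}` of a dyadic interval. -/
noncomputable def len (I : DI) : ENNReal := ENNReal.ofReal ((2 : ℝ)⁻¹ ^ I.n)

end DI

/-- The Carleson sum `∑_{I ∈ L, I ⊆ J} |I|`. -/
noncomputable def carlesonSum (L : Set DI) (J : DI) : ENNReal :=
  ∑' I : {I : DI // I ∈ L ∧ I.carrier ⊆ J.carrier}, I.1.len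

/-- `L` satisfies the `M`-Carleson condition. -/
def CarlesonLE (L : Set DI) (M : ENNReal) : Prop :=
  ∀ J : DI, carlesonSum L J ≤ M * J.len

/-- The Carleson constant `⟦L⟧ = sup_J (1/|J|) ∑_{I ∈ L, I ⊆ J} |I|`. -/
noncomputable def carlesonConst (L : Set DI) : ENNReal :=
  ⨆ J : DI, carlesonSum L J / J.len

/-- The square of the dyadic BMO norm of `x = ∑ x_I h_I`,
`‖x‖² = sup_J (1/|J|) ∑_{I ⊆ J} x_I² |I|`, in terms of the Haar coefficients. -/
noncomputable def bmoSq (x : DI → ℝ) : ENNReal :=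
  ⨆ J : DI, (∑' I : {I : DI // I.carrier ⊆ J.carrier},
      ENNReal.ofReal ((x I.1) ^ 2) * I.1.len) / J.len

/-- `|L*|`: the Lebesgue measure of the set covered by the collection `L`. -/
noncomputable def covMeas (L : Set DI) : ENNReal := volume (⋃ I ∈ L, I.carrier)

/-- `y` is the coefficient function of `Tx` where `T h_I = h_{τ(I)}` and `x` has
coefficients `x_I`. -/
def HaarCompat (τ : DI → DI) (x y : DI → ℝ) : Prop :=
  (∀ I, y (τ I) = x I) ∧ ∀ J, J ∉ Set.range τ → y J = 0

/-- The maximal elements of a collection of dyadic intervals, under inclusion. -/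
def maxSet (S : Set DI) : Set DI :=
  {I | I ∈ S ∧ ∀ K ∈ S, I.carrier ⊆ K.carrier → I = K}

namespace DI

theorem ext' {I K : DI} (hn : I.n = K.n) (hk : I.k = K.k) : I = K := by
  cases I; cases K; simp_all

instance : Countable DI :=
  Function.Injective.countable (f := fun I : DI => (I.n, I.k))
    fun _ _ h => ext' (congrArg Prod.fst h) (congrArg Prod.snd h)

lemma len_ne_zero (I : DI) : I.len ≠ 0 := by
  simp only [len, ne_eq, ENNReal.ofReal_eq_zero, not_le]
  positivity

lemma len_ne_top (I : DI) : I.len ≠ ⊤ := ENNReal.ofReal_ne_top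

lemma len_le_len_iff {I K : DI} : I.len ≤ K.len ↔ K.n ≤ I.n := by
  rw [len, len, ENNReal.ofReal_le_ofReal_iff (by positivity),
    pow_le_pow_iff_right_of_lt_one₀ (by norm_num) (by norm_num)]

lemma volume_carrier (I : DI) : volume I.carrier = I.len := by
  rw [carrier, Real.volume_Ico, len, ← sub_div, add_sub_cancel_left, one_div, inv_pow]

lemma mem_carrier_iff {I : DI} {z : ℝ} : z ∈ I.carrier ↔ 0 ≤ z ∧ ⌊z * 2 ^ I.n⌋₊ = I.k := by
  have h2 : (0 : ℝ) < 2 ^ I.n := by positivity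
  rw [carrier, Set.mem_Ico, div_le_iff₀ h2, lt_div_iff₀ h2]
  constructor
  · rintro ⟨hl, hr⟩
    have hz : 0 ≤ z * 2 ^ I.n := (Nat.cast_nonneg _).trans hl
    exact ⟨nonneg_of_mul_nonneg_left hz h2, (Nat.floor_eq_iff hz).2 ⟨hl, hr⟩⟩
  · rintro ⟨hz, hk⟩
    exact (Nat.floor_eq_iff (by positivity)).1 hk

lemma left_mem_carrier (I : DI) : (I.k : ℝ) / 2 ^ I.n ∈ I.carrier :=
  Set.left_mem_Ico.2 (div_lt_div_of_pos_right (lt_add_one _) (by positivity))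

lemma mem_carrier_iff_of_mem {I K : DI} {z : ℝ} (hn : K.n ≤ I.n) (hz : z ∈ I.carrier) :
    z ∈ K.carrier ↔ I.k / 2 ^ (I.n - K.n) = K.k := by
  obtain ⟨hz0, hzk⟩ := mem_carrier_iff.1 hz
  have hscale : z * 2 ^ K.n = z * 2 ^ I.n / ((2 ^ (I.n - K.n) : ℕ) : ℝ) := by
    rw [Nat.cast_pow, Nat.cast_ofNat, eq_div_iff (by positivity), mul_assoc, ← pow_add,
      Nat.add_sub_cancel' hn]
  rw [mem_carrier_iff, hscale, Nat.floor_div_natCast, hzk]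
  exact and_iff_right hz0

lemma subset_or_disjoint_of_n_le {I K : DI} (hn : K.n ≤ I.n) :
    I.carrier ⊆ K.carrier ∨ Disjoint I.carrier K.carrier := by
  refine or_iff_not_imp_right.2 fun hmeet w hw => ?_
  obtain ⟨z, hzI, hzK⟩ := Set.not_disjoint_iff.1 hmeet
  exact (mem_carrier_iff_of_mem hn hw).2 ((mem_carrier_iff_of_mem hn hzI).1 hzK)

lemma subset_or_subset_or_disjoint (I K : DI) :
    I.carrier ⊆ K.carrier ∨ K.carrier ⊆ I.carrier ∨ Disjoint I.carrier K.carrier := by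
  rcases le_total K.n I.n with hn | hn
  · exact (subset_or_disjoint_of_n_le hn).imp_right Or.inr
  · rcases subset_or_disjoint_of_n_le hn with h | h
    exacts [Or.inr (Or.inl h), Or.inr (Or.inr h.symm)]

lemma eq_of_subset_of_n_le {I K : DI} (h : I.carrier ⊆ K.carrier) (hn : I.n ≤ K.n) : I = K := by
  have hKI : K.n ≤ I.n := by
    rw [← len_le_len_iff, ← volume_carrier, ← volume_carrier]
    exact measure_mono h
  have he : I.n = K.n := le_antisymm hn hKI
  refine ext' he ?_
  simpa [he] using (mem_carrier_iff_of_mem hKI (left_mem_carrier I)).1 (h (left_mem_carrier I))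

end DI

noncomputable def energy (x : DI → ℝ) (I : DI) : ENNReal := ENNReal.ofReal (x I ^ 2) * I.len

lemma tsum_energy_le_bmoSq_mul_len (x : DI → ℝ) (J : DI) :
    ∑' I : {I : DI | I.carrier ⊆ J.carrier}, energy x I ≤ bmoSq x * J.len :=
  (ENNReal.div_le_iff J.len_ne_zero J.len_ne_top).1 <|
    le_iSup (fun J : DI => (∑' I : {I : DI // I.carrier ⊆ J.carrier}, energy x I) / J.len) J

lemma ofReal_sq_le_bmoSq (x : DI → ℝ) (I : DI) : ENNReal.ofReal (x I ^ 2) ≤ bmoSq x := by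
  refine (ENNReal.mul_le_mul_iff_left I.len_ne_zero I.len_ne_top).1 ?_
  have hI : I ∈ {K : DI | K.carrier ⊆ I.carrier} := subset_rfl (a := I.carrier)
  exact (ENNReal.le_tsum ⟨I, hI⟩).trans (tsum_energy_le_bmoSq_mul_len x I)

lemma exists_mem_maxSet_superset {L : Set DI} {I : DI} (hI : I ∈ L) :
    ∃ J ∈ maxSet L, I.carrier ⊆ J.carrier := by
  classical
  have hex : ∃ n, ∃ K ∈ L, I.carrier ⊆ K.carrier ∧ K.n = n := ⟨I.n, I, hI, subset_rfl, rfl⟩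
  obtain ⟨K, hKL, hIK, hKn⟩ := Nat.find_spec hex
  refine ⟨K, ⟨hKL, fun K' hK' hKK' => DI.eq_of_subset_of_n_le hKK' ?_⟩, hIK⟩
  exact hKn ▸ Nat.find_min' hex ⟨K', hK', hIK.trans hKK', rfl⟩

lemma pairwiseDisjoint_maxSet (L : Set DI) : (maxSet L).PairwiseDisjoint DI.carrier := by
  intro I hI K hK hne
  rcases DI.subset_or_subset_or_disjoint I K with h | h | h
  · exact absurd (hI.2 K hK.1 h) hne
  · exact absurd (hK.2 I hI.1 h).symm hne
  · exact h

lemma tsum_maxSet_len_le_covMeas (L : Set DI) : ∑' J : maxSet L, J.1.len ≤ covMeas L := by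
  calc ∑' J : maxSet L, J.1.len = volume (⋃ J ∈ maxSet L, J.carrier) := by
        simp only [← DI.volume_carrier]
        exact (measure_biUnion (Set.to_countable _) (pairwiseDisjoint_maxSet L)
          fun _ _ => measurableSet_Ico).symm
    _ ≤ covMeas L := measure_mono (Set.biUnion_subset_biUnion_left fun _ hJ => hJ.1)

lemma tsum_energy_le_bmoSq_mul_covMeas (x : DI → ℝ) (L : Set DI) :
    ∑' I : L, energy x I ≤ bmoSq x * covMeas L := by
  have hcover : L ⊆ ⋃ J ∈ maxSet L, {I : DI | I.carrier ⊆ J.carrier} := fun I hI => by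
    obtain ⟨J, hJ, hIJ⟩ := exists_mem_maxSet_superset hI
    exact Set.mem_biUnion hJ hIJ
  calc ∑' I : L, energy x I
      ≤ ∑' J : maxSet L, ∑' I : {I : DI | I.carrier ⊆ J.1.carrier}, energy x I :=
        (ENNReal.tsum_mono_subtype _ hcover).trans (ENNReal.tsum_biUnion_le_tsum _ _ _)
    _ ≤ ∑' J : maxSet L, bmoSq x * J.1.len :=
        ENNReal.tsum_le_tsum fun J => tsum_energy_le_bmoSq_mul_len x J
    _ ≤ bmoSq x * covMeas L := by
        rw [ENNReal.tsum_mul_left]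
        exact mul_le_mul_right (tsum_maxSet_len_le_covMeas L) _

lemma covMeas_le_len {L : Set DI} {J : DI} (hL : ∀ I ∈ L, I.carrier ⊆ J.carrier) :
    covMeas L ≤ J.len :=
  J.volume_carrier ▸ measure_mono (Set.iUnion₂_subset hL)

lemma tsum_energy_le_of_carlesonLE {y : DI → ℝ} {E : Set DI} {M c : ENNReal} {J : DI}
    (hE : CarlesonLE E M) (hEJ : ∀ K ∈ E, K.carrier ⊆ J.carrier)
    (hy : ∀ K ∈ E, ENNReal.ofReal (y K ^ 2) ≤ c) :
    ∑' K : E, energy y K ≤ c * (M * J.len) :=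
  calc ∑' K : E, energy y K ≤ ∑' K : E, c * K.1.len :=
        ENNReal.tsum_le_tsum fun K => mul_le_mul_left (hy K K.2) _
    _ = c * ∑' K : {K : DI | K ∈ E ∧ K.carrier ⊆ J.carrier}, K.1.len := by
        rw [ENNReal.tsum_mul_left]
        congr 1
        exact tsum_congr_set_coe _ (Set.ext fun K => (and_iff_left_of_imp (hEJ K)).symm)
    _ ≤ c * (M * J.len) := mul_le_mul_right (hE J) _

lemma tsum_energy_image_le {τ : DI → DI} {x y : DI → ℝ} (hxy : ∀ I, y (τ I) = x I)
    {L : Set DI} {c : ENNReal} (hL : ∀ I ∈ L, (τ I).len / I.len ≤ c / covMeas L) :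
    ∑' K : τ '' L, energy y K ≤ bmoSq x * c :=
  calc ∑' K : τ '' L, energy y K ≤ ∑' I : L, energy y (τ I) :=
        ENNReal.tsum_le_tsum_comp_of_surjective Set.imageFactorization_surjective _
    _ ≤ ∑' I : L, c / covMeas L * energy x I := ENNReal.tsum_le_tsum fun I => by
        have hI := (ENNReal.div_le_iff I.1.len_ne_zero I.1.len_ne_top).1 (hL I I.2)
        rw [energy, energy, hxy, mul_left_comm]
        exact mul_le_mul_right hI _
    _ ≤ c / covMeas L * (bmoSq x * covMeas L) := by
        rw [ENNReal.tsum_mul_left]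
        exact mul_le_mul_right (tsum_energy_le_bmoSq_mul_covMeas x L) _
    _ = bmoSq x * (covMeas L * (c / covMeas L)) := by ring
    _ ≤ bmoSq x * c := mul_le_mul_right ENNReal.mul_div_le _

lemma tsum_energy_le_add {y : DI → ℝ} {S A B : Set DI} (hy : ∀ K ∈ S, K ∉ A ∪ B → y K = 0) :
    ∑' K : S, energy y K ≤ ∑' K : A, energy y K + ∑' K : B, energy y K := by
  have hS : S ⊆ (A ∪ B) ∪ {K | y K = 0} := fun K hK => or_iff_not_imp_left.2 (hy K hK)
  have hzero : ∑' K : {K | y K = 0}, energy y K = 0 :=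
    ENNReal.tsum_eq_zero.2 fun K => by simp [energy, K.2.out]
  calc ∑' K : S, energy y K ≤ ∑' K : ↥((A ∪ B) ∪ {K | y K = 0}), energy y K :=
        ENNReal.tsum_mono_subtype _ hS
    _ ≤ ∑' K : ↥(A ∪ B), energy y K := by
        simpa only [hzero, add_zero] using ENNReal.tsum_union_le (energy y) (A ∪ B) {K | y K = 0}
    _ ≤ ∑' K : A, energy y K + ∑' K : B, energy y K := ENNReal.tsum_union_le _ A B

theorem stmt8_general (τ : DI → DI) (M : ENNReal)
    (hS : ∀ J : DI, ∃ L E : Set DI,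
      (τ '' L ∪ E = {K : DI | K ∈ Set.range τ ∧ K.carrier ⊆ J.carrier}) ∧
      Disjoint (τ '' L) E ∧
      CarlesonLE E M ∧
      ∀ I ∈ L, (τ I).len / I.len ≤ M * covMeas (τ '' L) / covMeas L)
    (x y : DI → ℝ) (hxy : HaarCompat τ x y) :
    bmoSq y ≤ 4 * M * bmoSq x := by
  refine iSup_le fun J => ENNReal.div_le_of_le_mul ?_
  obtain ⟨L, E, hsplit, -, hE, hL⟩ := hS J
  have hLE : ∀ K ∈ τ '' L ∪ E, K ∈ Set.range τ ∧ K.carrier ⊆ J.carrier := fun _ hK =>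
    hsplit.le hK
  have hy_range : ∀ K ∈ Set.range τ, ENNReal.ofReal (y K ^ 2) ≤ bmoSq x := by
    rintro _ ⟨I, rfl⟩
    exact hxy.1 I ▸ ofReal_sq_le_bmoSq x I
  have hy_zero : ∀ K ∈ {K : DI | K.carrier ⊆ J.carrier}, K ∉ τ '' L ∪ E → y K = 0 :=
    fun K hKJ hK => hxy.2 K fun hr => hK (hsplit.ge ⟨hr, hKJ⟩)
  calc ∑' K : {K : DI | K.carrier ⊆ J.carrier}, energy y K
      ≤ ∑' K : τ '' L, energy y K + ∑' K : E, energy y K := tsum_energy_le_add hy_zero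
    _ ≤ bmoSq x * (M * J.len) + bmoSq x * (M * J.len) := by
        gcongr
        · refine (tsum_energy_image_le hxy.1 hL).trans ?_
          gcongr
          exact covMeas_le_len fun K hK => (hLE K (.inl hK)).2
        · exact tsum_energy_le_of_carlesonLE hE (fun K hK => (hLE K (.inr hK)).2)
            fun K hK => hy_range K (hLE K (.inr hK)).1
    _ = 2 * M * bmoSq x * J.len := by ring
    _ ≤ 4 * M * bmoSq x * J.len := by gcongr; norm_num

/-- If `τ` satisfies condition `S`, then `T h_I = h_{τ(I)}` is bounded on dyadic BMO
with `‖Tx‖² ≤ 4M ‖x‖²`. -/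
theorem stmt8 (τ : DI → DI) (hτ : Function.Injective τ) (M : ENNReal) (hM : 1 ≤ M)
    (hS : ∀ J : DI, ∃ L E : Set DI,
      (τ '' L ∪ E = {K : DI | K ∈ Set.range τ ∧ K.carrier ⊆ J.carrier}) ∧
      Disjoint (τ '' L) E ∧
      CarlesonLE E M ∧
      ∀ I ∈ L, (τ I).len / I.len ≤ M * covMeas (τ '' L) / covMeas L)
    (x y : DI → ℝ) (hxy : HaarCompat τ x y) :
    bmoSq y ≤ 4 * M * bmoSq x :=
  stmt8_general τ M hS x y hxy
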